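/- arXiv:2601.00589 — 3 statements merged into one kernel-verified Lean document; each statement's English description precedes it below -/
import Mathlib

section
/- Brezis–Lieb lemma: Let 1<q<∞ and let f_n be a bounded sequence in L^q(R^d) with f_n → f almost everywhere. Then ||f_n||_q^q − ||f_n − f||_q^q → ||f||_q^q. -/
open MeasureTheory Filter Topology

/-!
For `q ≥ 1` and `ε > 0` there is `C_ε` with `|‖a + b‖^q - ‖a‖^q| ≤ ε ‖a‖^q + C_ε ‖b‖^q`:
by convexity of `t ↦ t^q` the left side is at most `q (‖a‖ + ‖b‖)^(q-1) ‖b‖`, and one splits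
according to whether `‖b‖ ≤ δ ‖a‖`. With `g_n = f_n - f`, the functions `φ_n = |‖f_n‖^q - ‖g_n‖^q - ‖f‖^q|`
tend to `0` a.e. and `(φ_n - ε ‖g_n‖^q)⁺ ≤ (C_ε + 1) ‖f‖^q`, so by dominated convergence
`limsup ∫ φ_n ≤ ε sup_n ∫ ‖g_n‖^q`. The last supremum is finite because Fatou's lemma puts `f`
in `L^q`, and `ε` is arbitrary.
-/

theorem Real.abs_rpow_sub_rpow_le {q x y : ℝ} (hq : 1 ≤ q) (hx : 0 ≤ x) (hy : 0 ≤ y) :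
    |x ^ q - y ^ q| ≤ q * max x y ^ (q - 1) * |x - y| := by
  wlog hyx : y < x generalizing x y
  · rcases (not_lt.1 hyx).eq_or_lt with rfl | hxy
    · simp
    · simpa only [abs_sub_comm, max_comm] using this hy hx hxy
  have hslope := (convexOn_rpow hq).slope_le_of_hasDerivAt hy hx hyx
    (Real.hasDerivAt_rpow_const (Or.inr hq))
  rw [slope_def_field, div_le_iff₀ (sub_pos.2 hyx)] at hslope
  rwa [max_eq_left hyx.le, abs_of_pos (sub_pos.2 hyx), abs_of_nonneg
    (sub_nonneg.2 (Real.rpow_le_rpow hy hyx.le (by linarith)))]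

theorem abs_norm_add_rpow_sub_norm_rpow_le {E : Type*} [SeminormedAddCommGroup E] {q : ℝ}
    (hq : 1 ≤ q) (a b : E) :
    |‖a + b‖ ^ q - ‖a‖ ^ q| ≤ q * (‖a‖ + ‖b‖) ^ (q - 1) * ‖b‖ := by
  have hdiff : |‖a + b‖ - ‖a‖| ≤ ‖b‖ := by simpa using abs_norm_sub_norm_le (a + b) a
  have hmax : max ‖a + b‖ ‖a‖ ≤ ‖a‖ + ‖b‖ :=
    max_le (norm_add_le a b) (le_add_of_nonneg_right (norm_nonneg b))
  calc _ ≤ q * max ‖a + b‖ ‖a‖ ^ (q - 1) * |‖a + b‖ - ‖a‖| :=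
        Real.abs_rpow_sub_rpow_le hq (norm_nonneg _) (norm_nonneg _)
    _ ≤ _ := by
      have : 0 ≤ q - 1 := by linarith
      gcongr

theorem Real.add_rpow_sub_one_mul_le {q δ s t : ℝ} (hq : 1 ≤ q) (hδ : 0 < δ) (hδ1 : δ ≤ 1)
    (hs : 0 ≤ s) (ht : 0 ≤ t) :
    (s + t) ^ (q - 1) * t ≤ 2 ^ (q - 1) * δ * s ^ q + (2 / δ) ^ (q - 1) * t ^ q := by
  have hq1 : 0 ≤ q - 1 := by linarith
  have hpow : ∀ x : ℝ, 0 ≤ x → x ^ (q - 1) * x = x ^ q := fun x hx => by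
    rw [← Real.rpow_add_one' hx (by linarith), sub_add_cancel]
  rcases le_or_gt t (δ * s) with hts | hst
  · calc (s + t) ^ (q - 1) * t ≤ (2 * s) ^ (q - 1) * (δ * s) := by
          gcongr; nlinarith
      _ = 2 ^ (q - 1) * δ * (s ^ (q - 1) * s) := by
          rw [Real.mul_rpow zero_le_two hs]; ring
      _ ≤ _ := by rw [hpow s hs]; exact le_add_of_nonneg_right (by positivity)
  · calc (s + t) ^ (q - 1) * t ≤ (2 / δ * t) ^ (q - 1) * t := by
          gcongr
          rw [div_mul_eq_mul_div, le_div_iff₀ hδ]; nlinarith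
      _ = (2 / δ) ^ (q - 1) * (t ^ (q - 1) * t) := by
          rw [Real.mul_rpow (by positivity) ht]; ring
      _ ≤ _ := by rw [hpow t ht]; exact le_add_of_nonneg_left (by positivity)

theorem exists_abs_norm_add_rpow_sub_norm_rpow_le {E : Type*} [SeminormedAddCommGroup E]
    {q ε : ℝ} (hq : 1 ≤ q) (hε : 0 < ε) :
    ∃ C : ℝ, ∀ a b : E, |‖a + b‖ ^ q - ‖a‖ ^ q| ≤ ε * ‖a‖ ^ q + C * ‖b‖ ^ q := by
  set δ := min 1 (ε / (q * 2 ^ (q - 1)))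
  have hq0 : 0 < q := by linarith
  have hδ : 0 < δ := lt_min one_pos (by positivity)
  have hδε : q * 2 ^ (q - 1) * δ ≤ ε := by
    rw [← le_div_iff₀' (by positivity)]; exact min_le_right _ _
  refine ⟨q * (2 / δ) ^ (q - 1), fun a b => ?_⟩
  calc _ ≤ q * ((‖a‖ + ‖b‖) ^ (q - 1) * ‖b‖) := by
        rw [← mul_assoc]; exact abs_norm_add_rpow_sub_norm_rpow_le hq a b
    _ ≤ q * (2 ^ (q - 1) * δ * ‖a‖ ^ q + (2 / δ) ^ (q - 1) * ‖b‖ ^ q) := by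
        gcongr
        exact Real.add_rpow_sub_one_mul_le hq hδ (min_le_left _ _) (norm_nonneg a) (norm_nonneg b)
    _ = q * 2 ^ (q - 1) * δ * ‖a‖ ^ q + q * (2 / δ) ^ (q - 1) * ‖b‖ ^ q := by ring
    _ ≤ _ := by gcongr

theorem exists_abs_norm_rpow_sub_norm_sub_rpow_sub_norm_rpow_le {E : Type*}
    [SeminormedAddCommGroup E] {q ε : ℝ} (hq : 1 ≤ q) (hε : 0 < ε) :
    ∃ C : ℝ, ∀ a b : E, |‖a‖ ^ q - ‖a - b‖ ^ q - ‖b‖ ^ q| ≤ ε * ‖a - b‖ ^ q + C * ‖b‖ ^ q := by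
  obtain ⟨C, hC⟩ := exists_abs_norm_add_rpow_sub_norm_rpow_le (E := E) hq hε
  refine ⟨C + 1, fun a b => ?_⟩
  have h := hC (a - b) b
  rw [sub_add_cancel] at h
  calc |‖a‖ ^ q - ‖a - b‖ ^ q - ‖b‖ ^ q| ≤ |‖a‖ ^ q - ‖a - b‖ ^ q| + |‖b‖ ^ q| := abs_sub _ _
    _ = |‖a‖ ^ q - ‖a - b‖ ^ q| + ‖b‖ ^ q := by
        rw [abs_of_nonneg (by positivity : (0 : ℝ) ≤ ‖b‖ ^ q)]
    _ ≤ _ := by linarith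

namespace MeasureTheory

variable {α : Type*} [MeasurableSpace α] {μ : Measure α}

theorem tendsto_integral_zero_of_forall_le_mul_add {φ G : ℕ → α → ℝ} {H : α → ℝ} {K : ℝ}
    (hφ : ∀ n, Integrable (φ n) μ) (hφ_nonneg : ∀ n x, 0 ≤ φ n x)
    (hφ_lim : ∀ᵐ x ∂μ, Tendsto (fun n => φ n x) atTop (𝓝 0))
    (hG : ∀ n, Integrable (G n) μ) (hG_nonneg : ∀ n x, 0 ≤ G n x)
    (hGK : ∀ n, ∫ x, G n x ∂μ ≤ K) (hH : Integrable H μ)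
    (hdom : ∀ ε > 0, ∃ C, ∀ n x, φ n x ≤ ε * G n x + C * H x) :
    Tendsto (fun n => ∫ x, φ n x ∂μ) atTop (𝓝 0) := by
  refine tendsto_order.2 ⟨fun a ha => .of_forall fun n =>
    ha.trans_le (integral_nonneg (hφ_nonneg n)), fun a ha => ?_⟩
  have hεK : Tendsto (fun ε => ε * K) (𝓝[>] 0) (𝓝 0) :=
    ((continuous_mul_const K).tendsto' 0 0 (zero_mul K)).mono_left nhdsWithin_le_nhds
  obtain ⟨ε, hεK, hε⟩ :=
    ((hεK.eventually (gt_mem_nhds (half_pos ha))).and self_mem_nhdsWithin).exists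
  obtain ⟨C, hC⟩ := hdom ε hε
  set ψ : ℕ → α → ℝ := fun n x => max (φ n x - ε * G n x) 0
  have hψ : ∀ n, Integrable (ψ n) μ := fun n => ((hφ n).sub ((hG n).const_mul ε)).pos_part
  have hψ_lim : Tendsto (fun n => ∫ x, ψ n x ∂μ) atTop (𝓝 0) := by
    refine integral_zero α ℝ ▸ tendsto_integral_of_dominated_convergence (fun x => |C * H x|)
      (fun n => (hψ n).aestronglyMeasurable) (hH.const_mul C).abs
      (fun n => .of_forall fun x => ?_) ?_
    · rw [Real.norm_of_nonneg (le_max_right _ _)]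
      exact max_le (by linarith [hC n x, le_abs_self (C * H x)]) (abs_nonneg _)
    · filter_upwards [hφ_lim] with x hx
      refine squeeze_zero (fun n => le_max_right _ _) (fun n => max_le ?_ (hφ_nonneg n x)) hx
      nlinarith [hG_nonneg n x]
  filter_upwards [hψ_lim.eventually (gt_mem_nhds (half_pos ha))] with n hn
  calc ∫ x, φ n x ∂μ ≤ ∫ x, ψ n x + ε * G n x ∂μ :=
        integral_mono (hφ n) ((hψ n).add ((hG n).const_mul ε)) fun x => by
          linarith [le_max_left (φ n x - ε * G n x) 0]
    _ = ∫ x, ψ n x ∂μ + ε * ∫ x, G n x ∂μ := by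
        rw [integral_add (hψ n) ((hG n).const_mul ε), integral_const_mul]
    _ < a := by nlinarith [hGK n]

variable {E : Type*} [NormedAddCommGroup E]

theorem MemLp.integrable_norm_rpow_ofReal {f : α → E} {q : ℝ} (hq : 0 < q)
    (hf : MemLp f (ENNReal.ofReal q) μ) : Integrable (fun x => ‖f x‖ ^ q) μ := by
  simpa [ENNReal.toReal_ofReal hq.le] using
    hf.integrable_norm_rpow (by simpa using hq) ENNReal.ofReal_ne_top

theorem MemLp.integral_norm_rpow_le_of_eLpNorm_le {f : α → E} {q : ℝ} {C : NNReal} (hq : 0 < q)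
    (hf : MemLp f (ENNReal.ofReal q) μ) (hC : eLpNorm f (ENNReal.ofReal q) μ ≤ C) :
    ∫ x, ‖f x‖ ^ q ∂μ ≤ (C : ℝ) ^ q := by
  rw [hf.eLpNorm_eq_integral_rpow_norm (by simpa using hq) ENNReal.ofReal_ne_top,
    ENNReal.toReal_ofReal hq.le, ← ENNReal.ofReal_coe_nnreal,
    ENNReal.ofReal_le_ofReal_iff C.coe_nonneg] at hC
  have hI : 0 ≤ ∫ x, ‖f x‖ ^ q ∂μ := integral_nonneg fun x => by positivity
  calc ∫ x, ‖f x‖ ^ q ∂μ = ((∫ x, ‖f x‖ ^ q ∂μ) ^ q⁻¹) ^ q := (Real.rpow_inv_rpow hI hq.ne').symm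
    _ ≤ (C : ℝ) ^ q := by gcongr

theorem tendsto_integral_norm_rpow_sub_integral_norm_sub_rpow {q : ℝ} (hq : 1 ≤ q)
    {f : ℕ → α → E} {f₀ : α → E} {C : NNReal}
    (hf : ∀ n, MemLp (f n) (ENNReal.ofReal q) μ)
    (hfC : ∀ n, eLpNorm (f n) (ENNReal.ofReal q) μ ≤ C)
    (hf_lim : ∀ᵐ x ∂μ, Tendsto (fun n => f n x) atTop (𝓝 (f₀ x))) :
    Tendsto (fun n => ∫ x, ‖f n x‖ ^ q ∂μ - ∫ x, ‖f n x - f₀ x‖ ^ q ∂μ) atTop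
      (𝓝 (∫ x, ‖f₀ x‖ ^ q ∂μ)) := by
  set p := ENNReal.ofReal q
  have hq0 : 0 < q := by linarith
  have hf₀C : eLpNorm f₀ p μ ≤ C :=
    Lp.eLpNorm_le_of_ae_tendsto (.of_forall hfC) (fun n => (hf n).1) hf_lim
  have hf₀ : MemLp f₀ p μ :=
    ⟨aestronglyMeasurable_of_tendsto_ae atTop (fun n => (hf n).1) hf_lim,
      hf₀C.trans_lt ENNReal.coe_lt_top⟩
  have hg : ∀ n, MemLp (f n - f₀) p μ := fun n => (hf n).sub hf₀
  have hgC : ∀ n, eLpNorm (f n - f₀) p μ ≤ ↑(2 * C) := fun n => calc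
    _ ≤ eLpNorm (f n) p μ + eLpNorm f₀ p μ :=
        eLpNorm_sub_le (hf n).1 hf₀.1 (ENNReal.one_le_ofReal.2 hq)
    _ ≤ C + C := add_le_add (hfC n) hf₀C
    _ = ↑(2 * C) := by push_cast; ring
  have hint := fun n => (hf n).integrable_norm_rpow_ofReal hq0
  have hgint : ∀ n, Integrable (fun x => ‖f n x - f₀ x‖ ^ q) μ :=
    fun n => (hg n).integrable_norm_rpow_ofReal hq0
  have hf₀int := hf₀.integrable_norm_rpow_ofReal hq0
  set φ := fun n x => |‖f n x‖ ^ q - ‖f n x - f₀ x‖ ^ q - ‖f₀ x‖ ^ q|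
  have hφ_lim : Tendsto (fun n => ∫ x, φ n x ∂μ) atTop (𝓝 0) := by
    refine tendsto_integral_zero_of_forall_le_mul_add
      (fun n => (((hint n).sub (hgint n)).sub hf₀int).abs) (fun n x => abs_nonneg _) ?_
      hgint (fun n x => by positivity)
      (fun n => (hg n).integral_norm_rpow_le_of_eLpNorm_le hq0 (hgC n)) hf₀int fun ε hε => ?_
    · filter_upwards [hf_lim] with x hx
      have h₁ := hx.norm.rpow_const (p := q) (Or.inr hq0.le)
      have h₂ := (tendsto_sub_nhds_zero_iff.2 hx).norm.rpow_const (p := q) (Or.inr hq0.le)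
      simpa [Real.zero_rpow hq0.ne'] using ((h₁.sub h₂).sub_const (‖f₀ x‖ ^ q)).abs
    · exact (exists_abs_norm_rpow_sub_norm_sub_rpow_sub_norm_rpow_le hq hε).imp
        fun C hC n x => hC (f n x) (f₀ x)
  rw [← tendsto_sub_nhds_zero_iff]
  refine squeeze_zero_norm (fun n => ?_) hφ_lim
  have hdiff : Integrable (fun x => ‖f n x‖ ^ q - ‖f n x - f₀ x‖ ^ q) μ := (hint n).sub (hgint n)
  rw [← integral_sub (hint n) (hgint n), ← integral_sub hdiff hf₀int]
  exact norm_integral_le_integral_norm _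

end MeasureTheory

/-- Brezis–Lieb lemma: if `{f_n}` is bounded in `L^q(ℝ^d)` (`1 < q < ∞`) and `f_n → f` a.e.,
then `‖f_n‖_q^q - ‖f_n - f‖_q^q → ‖f‖_q^q`. -/
theorem brezis_lieb (d : ℕ) (q : ℝ) (hq : 1 < q)
    (f : ℕ → EuclideanSpace ℝ (Fin d) → ℝ) (f₀ : EuclideanSpace ℝ (Fin d) → ℝ)
    (hmem : ∀ n, MemLp (f n) (ENNReal.ofReal q) volume)
    (hbdd : ∃ M : ℝ, ∀ n, eLpNorm (f n) (ENNReal.ofReal q) volume ≤ ENNReal.ofReal M)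
    (hae : ∀ᵐ x : EuclideanSpace ℝ (Fin d), Tendsto (fun n => f n x) atTop (nhds (f₀ x))) :
    Tendsto (fun n => (∫ x : EuclideanSpace ℝ (Fin d), |f n x| ^ q)
        - ∫ x : EuclideanSpace ℝ (Fin d), |f n x - f₀ x| ^ q)
      atTop (nhds (∫ x : EuclideanSpace ℝ (Fin d), |f₀ x| ^ q)) := by
  obtain ⟨M, hM⟩ := hbdd
  simpa only [Real.norm_eq_abs] using
    tendsto_integral_norm_rpow_sub_integral_norm_sub_rpow (C := M.toNNReal) hq.le hmem hM hae
end

section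
/- Nonlinear Brezis–Lieb lemma for the map J_q(t) = |t|^{q−2} t: if 1<q<∞, {f_n} is bounded in L^q(R^d), and f_n → f a.e., then J_q(f_n) − J_q(f_n − f) → J_q(f) strongly in L^{q'}(R^d), where q' = q/(q−1). -/
open MeasureTheory Filter

/-- `J_q(t) = |t|^{q-2} t`. -/
noncomputable def Jmap (q t : ℝ) : ℝ := |t| ^ (q - 2) * t

/-!
The pointwise input is the Brezis–Lieb inequality: for every `ε > 0` there is `C_ε` with
`|J(a + b) - J(a) - J(b)| ≤ ε |a|^{q-1} + C_ε |b|^{q-1}`. It follows from the multiplicativity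
`J(xy) = J(x) J(y)`, the identity `|J(t)| = |t|^{q-1}` and the continuity of `J` at `1`.

Put `g_n = J(f_n) - J(f_n - f) - J(f)`. The functions `W_n = (|g_n| - ε |f_n - f|^{q-1})⁺`
tend to `0` a.e. and are dominated by `C_ε |f|^{q-1} ∈ L^{q'}` (Fatou gives `f ∈ L^q`), so
`‖W_n‖_{q'} → 0`, while `‖ε |f_n - f|^{q-1}‖_{q'} = ε ‖f_n - f‖_q^{q-1} ≤ ε K^{q-1}` for a
uniform bound `K`. Hence `limsup ‖g_n‖_{q'} ≤ ε K^{q-1}` for every `ε > 0`.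
-/

open scoped ENNReal NNReal Topology

lemma Jmap_zero (q : ℝ) : Jmap q 0 = 0 := by simp [Jmap]

lemma Jmap_mul (q x y : ℝ) : Jmap q (x * y) = Jmap q x * Jmap q y := by
  simp only [Jmap, abs_mul, Real.mul_rpow (abs_nonneg x) (abs_nonneg y)]
  ring

lemma abs_Jmap {q : ℝ} (hq : q ≠ 1) (t : ℝ) : |Jmap q t| = |t| ^ (q - 1) := by
  rcases eq_or_ne t 0 with rfl | ht
  · simp [Jmap, Real.zero_rpow (sub_ne_zero.mpr hq)]
  · rw [Jmap, abs_mul, abs_of_nonneg (by positivity),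
      ← Real.rpow_add_one (abs_ne_zero.mpr ht)]
    ring_nf

lemma abs_Jmap_le {q : ℝ} (hq : 1 < q) {t s : ℝ} (h : |t| ≤ s) :
    |Jmap q t| ≤ s ^ (q - 1) := by
  rw [abs_Jmap hq.ne']
  exact Real.rpow_le_rpow (abs_nonneg t) h (by linarith)

lemma continuous_Jmap {q : ℝ} (hq : 1 < q) : Continuous (Jmap q) := by
  refine continuous_iff_continuousAt.mpr fun t => ?_
  rcases eq_or_ne t 0 with rfl | ht
  · have hpow : Tendsto (fun s : ℝ => |s| ^ (q - 1)) (𝓝 0) (𝓝 0) := by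
      simpa [Function.comp_def, Real.zero_rpow (by linarith : q - 1 ≠ 0)] using
        ((Real.continuous_rpow_const (q := q - 1) (by linarith)).comp continuous_abs).tendsto 0
    simpa [ContinuousAt, Jmap_zero] using
      squeeze_zero_norm (fun s => (abs_Jmap hq.ne' s).le) hpow
  · exact ((Real.continuousAt_rpow_const _ _ (Or.inl (abs_ne_zero.mpr ht))).comp
      continuous_abs.continuousAt).mul continuousAt_id

lemma abs_Jmap_add_sub_sub_le_of_abs_le {q : ℝ} (hq : 1 < q) {a b c : ℝ} (hc : 0 ≤ c)
    (ha : |a| ≤ c * |b|) :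
    |Jmap q (a + b) - Jmap q a - Jmap q b| ≤ 3 * (c + 1) ^ (q - 1) * |b| ^ (q - 1) := by
  have hJ : ∀ t, |t| ≤ (c + 1) * |b| → |Jmap q t| ≤ (c + 1) ^ (q - 1) * |b| ^ (q - 1) :=
    fun t ht => (abs_Jmap_le hq ht).trans_eq (Real.mul_rpow (by linarith) (abs_nonneg b))
  have hcb : 0 ≤ c * |b| := by positivity
  have hJab := hJ (a + b) ((abs_add_le a b).trans (by linarith))
  have hJa := hJ a (by linarith [abs_nonneg b])
  have hJb := hJ b (by linarith)
  calc |Jmap q (a + b) - Jmap q a - Jmap q b|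
      ≤ |Jmap q (a + b)| + |Jmap q a| + |Jmap q b| :=
        (abs_sub _ _).trans (add_le_add_left (abs_sub _ _) _)
    _ ≤ 3 * (c + 1) ^ (q - 1) * |b| ^ (q - 1) := by linarith

lemma exists_abs_Jmap_add_sub_sub_le {q : ℝ} (hq : 1 < q) {ε : ℝ} (hε : 0 < ε) :
    ∃ C : ℝ, 0 ≤ C ∧ ∀ a b : ℝ,
      |Jmap q (a + b) - Jmap q a - Jmap q b| ≤ ε * |a| ^ (q - 1) + C * |b| ^ (q - 1) := by
  obtain ⟨δ, hδ, hJ⟩ :=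
    Metric.continuousAt_iff.mp ((continuous_Jmap hq).continuousAt (x := 1)) ε hε
  have hδ' : 0 ≤ δ⁻¹ := inv_nonneg.mpr hδ.le
  have hC : 1 ≤ 3 * (δ⁻¹ + 1) ^ (q - 1) := by
    nlinarith [Real.one_le_rpow (by linarith : 1 ≤ δ⁻¹ + 1) (by linarith : 0 ≤ q - 1)]
  refine ⟨3 * (δ⁻¹ + 1) ^ (q - 1), by linarith, fun a b => ?_⟩
  have hεa : 0 ≤ ε * |a| ^ (q - 1) := by positivity
  rcases lt_or_ge |b| (δ * |a|) with hsmall | hlarge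
  · -- `J(a + b) = J(a) J(1 + b/a)`, and `1 + b/a` is within `δ` of `1`
    have ha : a ≠ 0 := by
      rintro rfl
      rw [abs_zero, mul_zero] at hsmall
      exact (abs_nonneg b).not_gt hsmall
    have hdist : dist (1 + b / a) 1 < δ := by
      rwa [Real.dist_eq, add_sub_cancel_left, abs_div, div_lt_iff₀ (abs_pos.mpr ha)]
    have hsplit : Jmap q (a + b) - Jmap q a = Jmap q a * (Jmap q (1 + b / a) - Jmap q 1) := by
      rw [mul_sub, ← Jmap_mul, ← Jmap_mul, mul_one, mul_add, mul_one, mul_div_cancel₀ _ ha]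
    have hclose : |Jmap q (1 + b / a) - Jmap q 1| ≤ ε := by
      simpa [Real.dist_eq] using (hJ hdist).le
    calc |Jmap q (a + b) - Jmap q a - Jmap q b|
        ≤ |Jmap q a| * |Jmap q (1 + b / a) - Jmap q 1| + |Jmap q b| := by
          rw [hsplit, ← abs_mul]; exact abs_sub _ _
      _ ≤ |a| ^ (q - 1) * ε + 1 * |b| ^ (q - 1) := by
          rw [abs_Jmap hq.ne', abs_Jmap hq.ne', one_mul]
          gcongr
      _ ≤ ε * |a| ^ (q - 1) + 3 * (δ⁻¹ + 1) ^ (q - 1) * |b| ^ (q - 1) := by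
          rw [mul_comm]; gcongr
  · have ha : |a| ≤ δ⁻¹ * |b| := by
      rw [inv_mul_eq_div, le_div_iff₀ hδ]; linarith
    linarith [abs_Jmap_add_sub_sub_le_of_abs_le hq hδ' ha]

lemma tendsto_Jmap_sub_Jmap_sub_Jmap {q : ℝ} (hq : 1 < q) {u : ℕ → ℝ} {a : ℝ}
    (hu : Tendsto u atTop (𝓝 a)) :
    Tendsto (fun n => Jmap q (u n) - Jmap q (u n - a) - Jmap q a) atTop (𝓝 0) := by
  have hJ := continuous_Jmap hq
  have hsub : Tendsto (fun n => u n - a) atTop (𝓝 0) := by simpa using hu.sub_const a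
  simpa [Jmap_zero] using
    ((hJ.tendsto a).comp hu |>.sub ((hJ.tendsto 0).comp hsub)).sub_const (Jmap q a)

theorem tendsto_zero_of_forall_le_add_mul {u : ℕ → ℝ≥0∞} {K : ℝ≥0∞} (hK : K ≠ ∞)
    (h : ∀ ε : ℝ≥0, 0 < ε → ∃ v : ℕ → ℝ≥0∞, Tendsto v atTop (𝓝 0) ∧ ∀ n, u n ≤ v n + ε * K) :
    Tendsto u atTop (𝓝 0) := by
  have hlimsup : ∀ ε : ℝ≥0, 0 < ε → limsup u atTop ≤ ε * K := fun ε hε => by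
    obtain ⟨v, hv, huv⟩ := h ε hε
    calc limsup u atTop ≤ limsup (fun n => v n + ε * K) atTop :=
          limsup_le_limsup (Eventually.of_forall huv)
      _ = ε * K := by simpa using (hv.add_const (ε * K : ℝ≥0∞)).limsup_eq
  have hεK : Tendsto (fun ε : ℝ≥0 => (ε : ℝ≥0∞) * K) (𝓝 0) (𝓝 0) := by
    simpa using ENNReal.Tendsto.mul_const
      (ENNReal.tendsto_coe.mpr (tendsto_id (x := 𝓝 (0 : ℝ≥0)))) (Or.inr hK)
  exact tendsto_of_le_liminf_of_limsup_le (by simp)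
    (ge_of_tendsto (hεK.mono_left nhdsWithin_le_nhds)
      (eventually_nhdsWithin_of_forall (s := Set.Ioi 0) hlimsup))

section

variable {α : Type*} [MeasurableSpace α] {μ : Measure α}

theorem tendsto_eLpNorm_zero_of_dominated {E : Type*} [NormedAddCommGroup E] {p : ℝ≥0∞}
    (hp0 : p ≠ 0) (hp : p ≠ ∞) {F : ℕ → α → E} {G : α → ℝ}
    (hF : ∀ n, AEStronglyMeasurable (F n) μ) (hG : MemLp G p μ)
    (hFG : ∀ n, ∀ᵐ x ∂μ, ‖F n x‖ ≤ G x)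
    (hlim : ∀ᵐ x ∂μ, Tendsto (fun n => F n x) atTop (𝓝 0)) :
    Tendsto (fun n => eLpNorm (F n) p μ) atTop (𝓝 0) := by
  have hp' : 0 < p.toReal := ENNReal.toReal_pos hp0 hp
  simp_rw [eLpNorm_eq_lintegral_rpow_enorm_toReal hp0 hp]
  have hint : Tendsto (fun n => ∫⁻ x, ‖F n x‖ₑ ^ p.toReal ∂μ) atTop (𝓝 0) := by
    rw [← lintegral_zero]
    exact tendsto_lintegral_of_dominated_convergence' (fun x => ‖G x‖ₑ ^ p.toReal)
      (fun n => (hF n).enorm.pow_const _)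
      (fun n => (hFG n).mono fun x hx =>
        ENNReal.rpow_le_rpow (enorm_le_iff_norm_le.mpr (hx.trans (Real.le_norm_self _))) hp'.le)
      (lintegral_rpow_enorm_lt_top_of_eLpNorm_lt_top hp0 hp hG.eLpNorm_lt_top).ne
      (hlim.mono fun x hx => by
        simpa [hp'] using (continuous_enorm.tendsto _ |>.comp hx).ennrpow_const p.toReal)
  simpa [hp'] using hint.ennrpow_const (1 / p.toReal)

theorem eLpNorm_abs_rpow_sub_one {q : ℝ} (hq : 1 < q) (g : α → ℝ) :
    eLpNorm (fun x => |g x| ^ (q - 1)) (ENNReal.ofReal (q / (q - 1))) μ =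
      eLpNorm g (ENNReal.ofReal q) μ ^ (q - 1) := by
  have h := eLpNorm_norm_rpow g (p := ENNReal.ofReal (q / (q - 1))) (μ := μ)
    (by linarith : 0 < q - 1)
  rwa [← ENNReal.ofReal_mul (by positivity), div_mul_cancel₀ _ (by linarith)] at h

theorem MeasureTheory.MemLp.abs_rpow_sub_one {q : ℝ} (hq : 1 < q) {g : α → ℝ}
    (hg : MemLp g (ENNReal.ofReal q) μ) :
    MemLp (fun x => |g x| ^ (q - 1)) (ENNReal.ofReal (q / (q - 1))) μ := by
  have h := hg.norm_rpow_div (ENNReal.ofReal (q - 1))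
  rwa [ENNReal.toReal_ofReal (by linarith), ← ENNReal.ofReal_div_of_pos (by linarith)] at h

theorem eLpNorm_le_add_mul_eLpNorm_rpow {q : ℝ} (hq : 1 < q) {g W u : α → ℝ}
    (hW : AEStronglyMeasurable W μ) (hu : AEStronglyMeasurable u μ) (ε : ℝ≥0)
    (hg : ∀ x, |g x| ≤ W x + ε * |u x| ^ (q - 1)) :
    eLpNorm g (ENNReal.ofReal (q / (q - 1))) μ ≤
      eLpNorm W (ENNReal.ofReal (q / (q - 1))) μ +
        ε * eLpNorm u (ENNReal.ofReal q) μ ^ (q - 1) := by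
  set r := ENNReal.ofReal (q / (q - 1))
  have hr : 1 ≤ r := ENNReal.one_le_ofReal.mpr ((one_le_div (by linarith)).mpr (by linarith))
  have hsmul : (fun x => (ε : ℝ) * |u x| ^ (q - 1)) = (ε : ℝ) • fun x => |u x| ^ (q - 1) := rfl
  calc eLpNorm g r μ ≤ eLpNorm (fun x => W x + ε * |u x| ^ (q - 1)) r μ :=
        eLpNorm_mono_real fun x => (Real.norm_eq_abs _).trans_le (hg x)
    _ ≤ eLpNorm W r μ + eLpNorm (fun x => (ε : ℝ) * |u x| ^ (q - 1)) r μ :=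
        eLpNorm_add_le hW ((hu.norm.aemeasurable.pow_const _).aestronglyMeasurable.const_mul _) hr
    _ = eLpNorm W r μ + ε * eLpNorm u (ENNReal.ofReal q) μ ^ (q - 1) := by
        rw [hsmul, eLpNorm_const_smul, eLpNorm_abs_rpow_sub_one hq,
          Real.enorm_of_nonneg ε.coe_nonneg, ENNReal.ofReal_coe_nnreal]

theorem tendsto_eLpNorm_Jmap_sub_Jmap_sub_Jmap {q : ℝ} (hq : 1 < q) {f : ℕ → α → ℝ}
    {f₀ : α → ℝ} (hf : ∀ n, AEStronglyMeasurable (f n) μ) (hf₀ : MemLp f₀ (ENNReal.ofReal q) μ)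
    {K : ℝ≥0∞} (hK : K ≠ ∞) (hfK : ∀ n, eLpNorm (f n - f₀) (ENNReal.ofReal q) μ ≤ K)
    (hae : ∀ᵐ x ∂μ, Tendsto (fun n => f n x) atTop (𝓝 (f₀ x))) :
    Tendsto (fun n => eLpNorm (fun x => Jmap q (f n x) - Jmap q (f n x - f₀ x) - Jmap q (f₀ x))
      (ENNReal.ofReal (q / (q - 1))) μ) atTop (𝓝 0) := by
  set g : ℕ → α → ℝ := fun n x => Jmap q (f n x) - Jmap q (f n x - f₀ x) - Jmap q (f₀ x)
  have hJ := continuous_Jmap hq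
  have hdiff n : AEStronglyMeasurable (f n - f₀) μ := (hf n).sub hf₀.1
  have hg n : AEStronglyMeasurable (g n) μ :=
    ((hJ.comp_aestronglyMeasurable (hf n)).sub (hJ.comp_aestronglyMeasurable (hdiff n))).sub
      (hJ.comp_aestronglyMeasurable hf₀.1)
  refine tendsto_zero_of_forall_le_add_mul
    (ENNReal.rpow_ne_top_of_nonneg (by linarith : 0 ≤ q - 1) hK) fun ε hε => ?_
  obtain ⟨C, hC, hCg⟩ := exists_abs_Jmap_add_sub_sub_le hq (NNReal.coe_pos.mpr hε)
  set h : ℕ → α → ℝ := fun n x => |f n x - f₀ x| ^ (q - 1)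
  have hh n : AEStronglyMeasurable (h n) μ :=
    ((hdiff n).norm.aemeasurable.pow_const _).aestronglyMeasurable
  set W : ℕ → α → ℝ := fun n x => max (|g n x| - ε * h n x) 0
  have hW n : AEStronglyMeasurable (W n) μ :=
    (((hg n).norm).sub ((hh n).const_mul _)).sup aestronglyMeasurable_const
  have hh₀ n x : 0 ≤ h n x := Real.rpow_nonneg (abs_nonneg _) _
  have hW_le n x : W n x ≤ |g n x| :=
    max_le (by linarith [mul_nonneg ε.coe_nonneg (hh₀ n x)]) (abs_nonneg _)
  refine ⟨fun n => eLpNorm (W n) (ENNReal.ofReal (q / (q - 1))) μ, ?_, fun n => ?_⟩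
  · refine tendsto_eLpNorm_zero_of_dominated (by positivity) ENNReal.ofReal_ne_top hW
      ((hf₀.abs_rpow_sub_one hq).const_mul C) (fun n => Eventually.of_forall fun x => ?_)
      (hae.mono fun x hx => squeeze_zero (fun n => le_max_right _ _) (hW_le · x)
        (by simpa using (tendsto_Jmap_sub_Jmap_sub_Jmap hq hx).abs))
    rw [Real.norm_of_nonneg (le_max_right _ _)]
    have hCg' : |g n x| ≤ ε * h n x + C * |f₀ x| ^ (q - 1) := by
      simpa [g, h] using hCg (f n x - f₀ x) (f₀ x)
    exact max_le (by linarith) (by positivity)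
  · calc _ ≤ eLpNorm (W n) (ENNReal.ofReal (q / (q - 1))) μ +
          ε * eLpNorm (f n - f₀) (ENNReal.ofReal q) μ ^ (q - 1) :=
          eLpNorm_le_add_mul_eLpNorm_rpow hq (hW n) (hdiff n) ε fun x => by
            show |g n x| ≤ W n x + ε * h n x
            linarith [le_max_left (|g n x| - ε * h n x) 0]
      _ ≤ _ := by gcongr; exact hfK n

end

/-- Nonlinear Brezis–Lieb lemma: if `1 < q < ∞`, `{f_n}` is bounded in `L^q(ℝ^d)` and
`f_n → f` a.e., then `J_q(f_n) - J_q(f_n - f) → J_q(f)` strongly in `L^{q'}(ℝ^d)`,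
where `q' = q/(q-1)`. -/
theorem nonlinear_brezis_lieb (d : ℕ) (q : ℝ) (hq : 1 < q)
    (f : ℕ → EuclideanSpace ℝ (Fin d) → ℝ) (f₀ : EuclideanSpace ℝ (Fin d) → ℝ)
    (hmem : ∀ n, MemLp (f n) (ENNReal.ofReal q) volume)
    (hbdd : ∃ M : ℝ, ∀ n, eLpNorm (f n) (ENNReal.ofReal q) volume ≤ ENNReal.ofReal M)
    (hae : ∀ᵐ x : EuclideanSpace ℝ (Fin d), Tendsto (fun n => f n x) atTop (nhds (f₀ x))) :
    Tendsto (fun n => eLpNorm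
        (fun x => Jmap q (f n x) - Jmap q (f n x - f₀ x) - Jmap q (f₀ x))
        (ENNReal.ofReal (q / (q - 1))) volume)
      atTop (nhds 0) := by
  obtain ⟨M, hM⟩ := hbdd
  have hf n : AEStronglyMeasurable (f n) volume := (hmem n).aestronglyMeasurable
  have hf₀ : MemLp f₀ (ENNReal.ofReal q) volume :=
    ⟨aestronglyMeasurable_of_tendsto_ae atTop hf hae,
      (Lp.eLpNorm_le_of_ae_tendsto (Eventually.of_forall hM) hf hae).trans_lt
        ENNReal.ofReal_lt_top⟩
  have hK : ENNReal.ofReal M + eLpNorm f₀ (ENNReal.ofReal q) volume ≠ ∞ :=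
    ENNReal.add_ne_top.mpr ⟨ENNReal.ofReal_ne_top, hf₀.eLpNorm_ne_top⟩
  refine tendsto_eLpNorm_Jmap_sub_Jmap_sub_Jmap hq hf hf₀ hK (fun n => ?_) hae
  exact (eLpNorm_sub_le (hf n) hf₀.1 (ENNReal.one_le_ofReal.mpr hq.le)).trans
    (add_le_add_left (hM n) _)
end

section
/- If u_n ⇀ u weakly in D^{s,p}(R^d) and u_n → u a.e., then the Gagliardo seminorms split: ||u_n||_{D^{s,p}}^p − ||u_n − u||_{D^{s,p}}^p → ||u||_{D^{s,p}}^p. -/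
open MeasureTheory Filter

noncomputable def gagliardo (d : ℕ) (s p : ℝ) (u : EuclideanSpace ℝ (Fin d) → ℝ) : ℝ :=
  ∫ z : EuclideanSpace ℝ (Fin d) × EuclideanSpace ℝ (Fin d),
    |u z.1 - u z.2| ^ p / ‖z.1 - z.2‖ ^ ((d : ℝ) + s * p)

def MemDsp (d : ℕ) (s p : ℝ) (u : EuclideanSpace ℝ (Fin d) → ℝ) : Prop :=
  MemLp u (ENNReal.ofReal (d * p / (d - s * p))) volume ∧
  Integrable (fun z : EuclideanSpace ℝ (Fin d) × EuclideanSpace ℝ (Fin d) =>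
    |u z.1 - u z.2| ^ p / ‖z.1 - z.2‖ ^ ((d : ℝ) + s * p)) volume

/-!
Put `F_u(x, y) = (u x - u y) / ‖x - y‖ ^ ((d + s p) / p)`. Then `gagliardo d s p u = ∫ |F_u| ^ p`
over `ℝ^d × ℝ^d` and `F_{u_n - u} = F_{u_n} - F_u`, so the statement is the Brezis–Lieb lemma for
`F_{u_n} → F_u` a.e. with bounded `L^p` norms. Convexity of `t ↦ t ^ p` gives, for each
`ε > 0`, `|‖a + b‖ ^ p - ‖a‖ ^ p| ≤ ε (‖a‖ ^ p + ‖a + b‖ ^ p) + C_ε ‖b‖ ^ p`. With `a = f_n - f`,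
`b = f`, the defect `‖f_n‖ ^ p - ‖f_n - f‖ ^ p - ‖f‖ ^ p` exceeds `ε` times an integrably
bounded quantity only by a part that is dominated by `(C_ε + 1) ‖f‖ ^ p` and tends to `0` a.e., hence in `L¹`.
-/

open Real Topology

section BrezisLieb

variable {α E : Type*} [MeasurableSpace α] {μ : Measure α} [NormedAddCommGroup E]

theorem add_rpow_le_weighted {p t x y : ℝ} (hp : 1 ≤ p) (ht₀ : 0 < t) (ht₁ : t < 1)
    (hx : 0 ≤ x) (hy : 0 ≤ y) :
    (x + y) ^ p ≤ t ^ (1 - p) * x ^ p + (1 - t) ^ (1 - p) * y ^ p := by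
  have ht₁' : 0 < 1 - t := sub_pos.2 ht₁
  have key := (convexOn_rpow hp).2 (Set.mem_Ici.2 (div_nonneg hx ht₀.le))
    (Set.mem_Ici.2 (div_nonneg hy ht₁'.le)) ht₀.le ht₁'.le (add_sub_cancel t 1)
  have weight : ∀ {c : ℝ}, 0 < c → ∀ {z : ℝ}, 0 ≤ z → c * (z / c) ^ p = c ^ (1 - p) * z ^ p :=
    fun hc _ hz => by
      rw [div_rpow hz hc.le, rpow_sub hc, rpow_one]; field_simp
  simp only [smul_eq_mul, mul_div_cancel₀ _ ht₀.ne', mul_div_cancel₀ _ ht₁'.ne'] at key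
  rwa [weight ht₀ hx, weight ht₁' hy] at key

theorem norm_add_rpow_le_weighted {p t : ℝ} (hp : 1 ≤ p) (ht₀ : 0 < t) (ht₁ : t < 1) (a b : E) :
    ‖a + b‖ ^ p ≤ t ^ (1 - p) * ‖a‖ ^ p + (1 - t) ^ (1 - p) * ‖b‖ ^ p :=
  (rpow_le_rpow (norm_nonneg _) (norm_add_le a b) (by linarith)).trans
    (add_rpow_le_weighted hp ht₀ ht₁ (norm_nonneg a) (norm_nonneg b))

theorem norm_sub_rpow_le {p : ℝ} (hp : 1 ≤ p) (a b : E) :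
    ‖a - b‖ ^ p ≤ 2 ^ (p - 1) * (‖a‖ ^ p + ‖b‖ ^ p) := by
  have h := norm_add_rpow_le_weighted hp (t := 1 / 2) (by norm_num) (by norm_num) a (-b)
  have hw : (1 / 2 : ℝ) ^ (1 - p) = 2 ^ (p - 1) := by
    rw [one_div, inv_rpow zero_le_two, ← rpow_neg zero_le_two, neg_sub]
  rw [norm_neg, ← sub_eq_add_neg, show (1 : ℝ) - 1 / 2 = 1 / 2 by norm_num, hw] at h
  linarith

theorem exists_abs_norm_add_rpow_sub_le {p ε : ℝ} (hp : 1 < p) (hε : 0 < ε) :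
    ∃ C : ℝ, ∀ a b : E, |‖a + b‖ ^ p - ‖a‖ ^ p| ≤ ε * (‖a‖ ^ p + ‖a + b‖ ^ p) + C * ‖b‖ ^ p := by
  set t := (1 + ε) ^ (1 - p)⁻¹
  have ht₀ : 0 < t := by positivity
  have ht₁ : t < 1 := rpow_lt_one_of_one_lt_of_neg (by linarith) (inv_lt_zero.2 (by linarith))
  have htp : t ^ (1 - p) = 1 + ε := by
    rw [← rpow_mul (by positivity), inv_mul_cancel₀ (by linarith), rpow_one]
  refine ⟨(1 - t) ^ (1 - p), fun a b => abs_sub_le_iff.2 ⟨?_, ?_⟩⟩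
  · have := norm_add_rpow_le_weighted hp.le ht₀ ht₁ a b
    rw [htp] at this
    have : 0 ≤ ε * ‖a + b‖ ^ p := by positivity
    linarith
  · have := norm_add_rpow_le_weighted hp.le ht₀ ht₁ (a + b) (-b)
    rw [add_neg_cancel_right, norm_neg, htp] at this
    have : 0 ≤ ε * ‖a‖ ^ p := by positivity
    linarith

theorem exists_abs_norm_rpow_sub_norm_sub_rpow_sub_le {p ε : ℝ} (hp : 1 < p) (hε : 0 < ε) :
    ∃ C : ℝ, ∀ a b : E,
      |‖a‖ ^ p - ‖a - b‖ ^ p - ‖b‖ ^ p| ≤ ε * (‖a - b‖ ^ p + ‖a‖ ^ p) + C * ‖b‖ ^ p := by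
  obtain ⟨C, hC⟩ := exists_abs_norm_add_rpow_sub_le (E := E) hp hε
  refine ⟨C + 1, fun a b => ?_⟩
  have h := hC (a - b) b
  rw [sub_add_cancel] at h
  have : 0 ≤ ‖b‖ ^ p := by positivity
  rw [abs_le] at h ⊢
  constructor <;> linarith [h.1, h.2]

theorem MeasureTheory.MemLp.integrable_norm_rpow_ofReal_s6 {p : ℝ} {f : α → E} (hp : 0 < p)
    (hf : MemLp f (ENNReal.ofReal p) μ) : Integrable (fun x => ‖f x‖ ^ p) μ := by
  simpa [ENNReal.toReal_ofReal hp.le] using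
    hf.integrable_norm_rpow (by simpa using hp) ENNReal.ofReal_ne_top

theorem integral_norm_sub_rpow_le {p : ℝ} (hp : 1 ≤ p) {f g : α → E}
    (hf : MemLp f (ENNReal.ofReal p) μ) (hg : MemLp g (ENNReal.ofReal p) μ) :
    ∫ x, ‖f x - g x‖ ^ p ∂μ ≤ 2 ^ (p - 1) * (∫ x, ‖f x‖ ^ p ∂μ + ∫ x, ‖g x‖ ^ p ∂μ) := by
  have hp₀ : 0 < p := by linarith
  have hf' := hf.integrable_norm_rpow_ofReal_s6 hp₀
  have hg' := hg.integrable_norm_rpow_ofReal_s6 hp₀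
  rw [← integral_add hf' hg', ← integral_const_mul]
  exact integral_mono ((hf.sub hg).integrable_norm_rpow_ofReal_s6 hp₀) ((hf'.add hg').const_mul _)
    fun x => norm_sub_rpow_le hp (f x) (g x)

theorem tendsto_integral_max_abs_sub_zero {w m : ℕ → α → ℝ} {G : α → ℝ}
    (hw : ∀ n, AEStronglyMeasurable (w n) μ) (hm : ∀ n, AEStronglyMeasurable (m n) μ)
    (hG : Integrable G μ) (hm₀ : ∀ n x, 0 ≤ m n x) (hle : ∀ n x, |w n x| ≤ m n x + G x)
    (hlim : ∀ᵐ x ∂μ, Tendsto (fun n => w n x) atTop (𝓝 0)) :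
    Tendsto (fun n => ∫ x, max (|w n x| - m n x) 0 ∂μ) atTop (𝓝 0) := by
  have hbound : ∀ n x, ‖max (|w n x| - m n x) 0‖ ≤ |G x| := fun n x => by
    rw [Real.norm_of_nonneg (le_max_right _ _)]
    exact max_le (by linarith [hle n x, le_abs_self (G x)]) (abs_nonneg _)
  have hlim' : ∀ᵐ x ∂μ, Tendsto (fun n => max (|w n x| - m n x) 0) atTop (𝓝 0) :=
    hlim.mono fun x hx => squeeze_zero (fun n => le_max_right _ _)
      (fun n => max_le (by linarith [hm₀ n x]) (abs_nonneg _)) (by simpa using hx.abs)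
  simpa using tendsto_integral_of_dominated_convergence (fun x => |G x|)
    (fun n => ((hw n).norm.sub (hm n)).sup aestronglyMeasurable_const) hG.abs
    (fun n => .of_forall (hbound n)) hlim'

variable {p : ℝ} {f : ℕ → α → E} {f₀ : α → E}

theorem eventually_abs_integral_norm_rpow_sub_lt (hp : 1 < p)
    (hf : ∀ n, MemLp (f n) (ENNReal.ofReal p) μ) (hf₀ : MemLp f₀ (ENNReal.ofReal p) μ)
    (hae : ∀ᵐ x ∂μ, Tendsto (fun n => f n x) atTop (𝓝 (f₀ x))) {B : ℝ}
    (hB : ∀ n, ∫ x, ‖f n x - f₀ x‖ ^ p ∂μ + ∫ x, ‖f n x‖ ^ p ∂μ ≤ B) {ε η : ℝ} (hε : 0 < ε)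
    (hη : 0 < η) :
    ∀ᶠ n in atTop,
      |∫ x, ‖f n x‖ ^ p ∂μ - ∫ x, ‖f n x - f₀ x‖ ^ p ∂μ - ∫ x, ‖f₀ x‖ ^ p ∂μ| < ε * B + η := by
  have hp₀ : 0 < p := by linarith
  obtain ⟨C, hC⟩ := exists_abs_norm_rpow_sub_norm_sub_rpow_sub_le (E := E) hp hε
  have hfn n := (hf n).integrable_norm_rpow_ofReal_s6 hp₀
  have hgn n : Integrable (fun x => ‖f n x - f₀ x‖ ^ p) μ :=
    ((hf n).sub hf₀).integrable_norm_rpow_ofReal_s6 hp₀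
  have hf₀' := hf₀.integrable_norm_rpow_ofReal_s6 hp₀
  set w : ℕ → α → ℝ := fun n x => ‖f n x‖ ^ p - ‖f n x - f₀ x‖ ^ p - ‖f₀ x‖ ^ p
  set m : ℕ → α → ℝ := fun n x => ε * (‖f n x - f₀ x‖ ^ p + ‖f n x‖ ^ p)
  have hw n : Integrable (w n) μ := ((hfn n).sub (hgn n)).sub hf₀'
  have hm n : Integrable (m n) μ := ((hgn n).add (hfn n)).const_mul ε
  have hlim : ∀ᵐ x ∂μ, Tendsto (fun n => w n x) atTop (𝓝 0) := hae.mono fun x hx => by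
    have hcont : Continuous fun y : E => ‖y‖ ^ p - ‖y - f₀ x‖ ^ p - ‖f₀ x‖ ^ p := by
      fun_prop (disch := positivity)
    simpa [w, Function.comp_def, zero_rpow hp₀.ne'] using (hcont.tendsto (f₀ x)).comp hx
  have hrem := tendsto_integral_max_abs_sub_zero (fun n => (hw n).aestronglyMeasurable)
    (fun n => (hm n).aestronglyMeasurable) (hf₀'.const_mul C)
    (fun n x => by positivity) (fun n x => hC (f n x) (f₀ x)) hlim
  filter_upwards [hrem.eventually_lt_const hη] with n hn
  have hsplit : ∫ x, w n x ∂μ =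
      ∫ x, ‖f n x‖ ^ p ∂μ - ∫ x, ‖f n x - f₀ x‖ ^ p ∂μ - ∫ x, ‖f₀ x‖ ^ p ∂μ :=
    (integral_sub ((hfn n).sub (hgn n)) hf₀').trans
      (congrArg (· - _) (integral_sub (hfn n) (hgn n)))
  have hmn : ∫ x, m n x ∂μ ≤ ε * B := by
    rw [integral_const_mul, integral_add (hgn n) (hfn n)]
    exact mul_le_mul_of_nonneg_left (hB n) hε.le
  have hpos : Integrable (fun x => max (|w n x| - m n x) 0) μ := ((hw n).abs.sub (hm n)).pos_part
  rw [← hsplit]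
  calc |∫ x, w n x ∂μ| ≤ ∫ x, |w n x| ∂μ := abs_integral_le_integral_abs
    _ ≤ ∫ x, (max (|w n x| - m n x) 0 + m n x) ∂μ :=
      integral_mono (hw n).abs (hpos.add (hm n)) fun x => by
        linarith [le_max_left (|w n x| - m n x) 0]
    _ = ∫ x, max (|w n x| - m n x) 0 ∂μ + ∫ x, m n x ∂μ := integral_add hpos (hm n)
    _ < ε * B + η := by linarith

theorem tendsto_integral_norm_rpow_sub_integral_norm_sub_rpow (hp : 1 < p)
    (hf : ∀ n, MemLp (f n) (ENNReal.ofReal p) μ) (hf₀ : MemLp f₀ (ENNReal.ofReal p) μ)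
    (hbdd : ∃ M, ∀ n, ∫ x, ‖f n x‖ ^ p ∂μ ≤ M)
    (hae : ∀ᵐ x ∂μ, Tendsto (fun n => f n x) atTop (𝓝 (f₀ x))) :
    Tendsto (fun n => ∫ x, ‖f n x‖ ^ p ∂μ - ∫ x, ‖f n x - f₀ x‖ ^ p ∂μ) atTop
      (𝓝 (∫ x, ‖f₀ x‖ ^ p ∂μ)) := by
  obtain ⟨M, hM⟩ := hbdd
  set B := 2 ^ (p - 1) * (M + ∫ x, ‖f₀ x‖ ^ p ∂μ) + M
  have hB n : ∫ x, ‖f n x - f₀ x‖ ^ p ∂μ + ∫ x, ‖f n x‖ ^ p ∂μ ≤ B := by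
    have := integral_norm_sub_rpow_le hp.le (hf n) hf₀
    have : (0 : ℝ) ≤ 2 ^ (p - 1) := by positivity
    nlinarith [hM n]
  have hB₀ : 0 ≤ B := (add_nonneg (integral_nonneg fun _ => by positivity)
    (integral_nonneg fun _ => by positivity)).trans (hB 0)
  refine Metric.tendsto_nhds.2 fun δ hδ => ?_
  filter_upwards [eventually_abs_integral_norm_rpow_sub_lt hp hf hf₀ hae hB
    (ε := δ / (2 * (B + 1))) (by positivity) (half_pos hδ)] with n hn
  have hεB : δ / (2 * (B + 1)) * B ≤ δ / 2 := by
    rw [div_mul_eq_mul_div, div_le_div_iff₀ (by positivity) two_pos]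
    nlinarith
  rw [Real.dist_eq]
  linarith

end BrezisLieb

section Gagliardo

variable {d : ℕ} {s p : ℝ}

local notation "ℝ^" d => EuclideanSpace ℝ (Fin d)

noncomputable def gagliardoQuotient (d : ℕ) (s p : ℝ) (u : (ℝ^d) → ℝ) (z : (ℝ^d) × (ℝ^d)) : ℝ :=
  (u z.1 - u z.2) / ‖z.1 - z.2‖ ^ (((d : ℝ) + s * p) / p)

/-- No diagonal exception is needed: for `x = y` both sides vanish, since `0 ^ p = 0`. -/
theorem abs_gagliardoQuotient_rpow (hp : p ≠ 0) (u : (ℝ^d) → ℝ) (z : (ℝ^d) × (ℝ^d)) :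
    |gagliardoQuotient d s p u z| ^ p = |u z.1 - u z.2| ^ p / ‖z.1 - z.2‖ ^ ((d : ℝ) + s * p) := by
  rw [gagliardoQuotient, abs_div, div_rpow (abs_nonneg _) (abs_nonneg _),
    abs_of_nonneg (rpow_nonneg (norm_nonneg _) _), ← rpow_mul (norm_nonneg _),
    div_mul_cancel₀ _ hp]

theorem gagliardo_eq_integral_norm_rpow (hp : p ≠ 0) (u : (ℝ^d) → ℝ) :
    gagliardo d s p u = ∫ z, ‖gagliardoQuotient d s p u z‖ ^ p := by
  simp only [Real.norm_eq_abs, abs_gagliardoQuotient_rpow hp, gagliardo]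

theorem gagliardoQuotient_sub (u v : (ℝ^d) → ℝ) :
    gagliardoQuotient d s p (fun x => u x - v x) =
      fun z => gagliardoQuotient d s p u z - gagliardoQuotient d s p v z := by
  ext z
  simp only [gagliardoQuotient]
  ring

theorem aestronglyMeasurable_gagliardoQuotient {u : (ℝ^d) → ℝ} (hu : AEStronglyMeasurable u) :
    AEStronglyMeasurable (gagliardoQuotient d s p u) := by
  rw [Measure.volume_eq_prod]
  exact ((hu.comp_fst.sub hu.comp_snd).aemeasurable.div
    ((measurable_fst.sub measurable_snd).norm.pow_const _).aemeasurable).aestronglyMeasurable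

theorem MemDsp.memLp_gagliardoQuotient (hp : 0 < p) {u : (ℝ^d) → ℝ} (hu : MemDsp d s p u) :
    MemLp (gagliardoQuotient d s p u) (ENNReal.ofReal p) := by
  rw [← integrable_norm_rpow_iff (aestronglyMeasurable_gagliardoQuotient hu.1.1)
    (by simpa using hp) ENNReal.ofReal_ne_top, ENNReal.toReal_ofReal hp.le]
  simpa only [Real.norm_eq_abs, abs_gagliardoQuotient_rpow hp.ne'] using hu.2

theorem ae_tendsto_gagliardoQuotient {u : ℕ → (ℝ^d) → ℝ} {u₀ : (ℝ^d) → ℝ}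
    (hae : ∀ᵐ x, Tendsto (fun n => u n x) atTop (𝓝 (u₀ x))) :
    ∀ᵐ z, Tendsto (fun n => gagliardoQuotient d s p (u n) z) atTop
      (𝓝 (gagliardoQuotient d s p u₀ z)) := by
  rw [Measure.volume_eq_prod]
  filter_upwards [Measure.quasiMeasurePreserving_fst.ae hae,
    Measure.quasiMeasurePreserving_snd.ae hae] with z hz₁ hz₂
  exact (hz₁.sub hz₂).div_const _

end Gagliardo

theorem gagliardo_brezis_lieb_general (d : ℕ) (s p : ℝ)
    (hp : 1 < p)
    (u : ℕ → EuclideanSpace ℝ (Fin d) → ℝ) (u₀ : EuclideanSpace ℝ (Fin d) → ℝ)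
    (hu : ∀ n, MemDsp d s p (u n)) (hu₀ : MemDsp d s p u₀)
    (hbdd : ∃ M : ℝ, ∀ n, gagliardo d s p (u n) ≤ M)
    (hae : ∀ᵐ x : EuclideanSpace ℝ (Fin d), Tendsto (fun n => u n x) atTop (nhds (u₀ x))) :
    Tendsto (fun n => gagliardo d s p (u n) - gagliardo d s p (fun x => u n x - u₀ x))
      atTop (nhds (gagliardo d s p u₀)) := by
  have hp₀ : 0 < p := by linarith
  simp only [gagliardo_eq_integral_norm_rpow hp₀.ne', gagliardoQuotient_sub] at hbdd ⊢
  exact tendsto_integral_norm_rpow_sub_integral_norm_sub_rpow hp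
    (fun n => (hu n).memLp_gagliardoQuotient hp₀) (hu₀.memLp_gagliardoQuotient hp₀) hbdd
    (ae_tendsto_gagliardoQuotient hae)

/-- Brezis–Lieb splitting of the Gagliardo seminorm: if `u_n ⇀ u` weakly in `D^{s,p}`
(in particular bounded) and `u_n → u` a.e., then
`‖u_n‖_{D^{s,p}}^p - ‖u_n - u‖_{D^{s,p}}^p → ‖u‖_{D^{s,p}}^p`. -/
theorem gagliardo_brezis_lieb (d : ℕ) (s p : ℝ)
    (hs : 0 < s) (hs1 : s < 1) (hp : 1 < p) (hd : s * p < d)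
    (u : ℕ → EuclideanSpace ℝ (Fin d) → ℝ) (u₀ : EuclideanSpace ℝ (Fin d) → ℝ)
    (hu : ∀ n, MemDsp d s p (u n)) (hu₀ : MemDsp d s p u₀)
    (hbdd : ∃ M : ℝ, ∀ n, gagliardo d s p (u n) ≤ M)
    (hae : ∀ᵐ x : EuclideanSpace ℝ (Fin d), Tendsto (fun n => u n x) atTop (nhds (u₀ x))) :
    Tendsto (fun n => gagliardo d s p (u n) - gagliardo d s p (fun x => u n x - u₀ x))
      atTop (nhds (gagliardo d s p u₀)) :=
  gagliardo_brezis_lieb_general d s p hp u u₀ hu hu₀ hbdd hae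
end
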